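/- arXiv:1409.3193 — 6 statements merged into one kernel-verified Lean document; each statement's English description precedes it below -/
import Mathlib

section
/- In the system D(C,D,4) = A(−1,0), a nonzero element w = a₁ + a₂·i + a₃·j + a₄·k is a zero divisor if and only if a₁ = 0 and a₂ = 0; that is, for w ≠ 0, there exists v ≠ 0 with w·v = 0 if and only if a₁ = a₂ = 0. -/
open Quaternion

/-!
Since `star w * w = w * star w` is the scalar `N(w)`, a relation `w * v = 0` with `v ≠ 0` gives
`N(w) • v = 0`, hence `N(w) = 0`; conversely, if `N(w) = 0` then `w * star w = 0` with
`star w ≠ 0`. In `A(-1,0)` the norm is `a₁² + a₂²`.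
-/

namespace QuaternionAlgebra

section CommRing

variable {R : Type*} [CommRing R] {c₁ c₂ c₃ : R}

/-- The reduced norm (the pseudonorm `N`); `star a * a` is a scalar by `star_mul_eq_coe`. -/
def normSq (a : ℍ[R,c₁,c₂,c₃]) : R := (star a * a).re

theorem normSq_def' (a : ℍ[R,c₁,c₂,c₃]) :
    a.normSq = a.re ^ 2 + c₂ * a.re * a.imI - c₁ * a.imI ^ 2 - c₃ * a.imJ ^ 2
      - c₂ * c₃ * a.imJ * a.imK + c₁ * c₃ * a.imK ^ 2 := by
  simp only [QuaternionAlgebra.normSq, re_mul, re_star, imI_star, imJ_star, imK_star]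
  ring

theorem coe_normSq_eq_star_mul_self (a : ℍ[R,c₁,c₂,c₃]) :
    (a.normSq : ℍ[R,c₁,c₂,c₃]) = star a * a :=
  (star_mul_eq_coe a).symm

theorem coe_normSq_eq_self_mul_star (a : ℍ[R,c₁,c₂,c₃]) :
    (a.normSq : ℍ[R,c₁,c₂,c₃]) = a * star a :=
  (coe_normSq_eq_star_mul_self a).trans (star_comm_self' a)

end CommRing

variable {K : Type*} [Field K] {c₁ c₂ c₃ : K}

theorem normSq_eq_zero_of_mul_eq_zero {a b : ℍ[K,c₁,c₂,c₃]} (h : a * b = 0) (hb : b ≠ 0) :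
    a.normSq = 0 := by
  have : a.normSq • b = 0 := by
    rw [← coe_mul_eq_smul, coe_normSq_eq_star_mul_self, mul_assoc, h, mul_zero]
  exact (smul_eq_zero.mp this).resolve_right hb

theorem exists_ne_zero_mul_eq_zero_iff {a : ℍ[K,c₁,c₂,c₃]} (ha : a ≠ 0) :
    (∃ b, b ≠ 0 ∧ a * b = 0) ↔ a.normSq = 0 := by
  refine ⟨fun ⟨b, hb, h⟩ => normSq_eq_zero_of_mul_eq_zero h hb,
    fun h => ⟨star a, star_ne_zero.mpr ha, ?_⟩⟩
  rw [← coe_normSq_eq_self_mul_star, h, coe_zero]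

theorem normSq_mk_neg_one_zero (a₁ a₂ a₃ a₄ : ℝ) :
    (⟨a₁, a₂, a₃, a₄⟩ : ℍ[ℝ, (-1 : ℝ), (0 : ℝ)]).normSq = a₁ ^ 2 + a₂ ^ 2 := by
  rw [normSq_def']
  ring

end QuaternionAlgebra

/-- In the system D(C,D,4) = A(−1,0), a nonzero element `w = ⟨a₁,a₂,a₃,a₄⟩` is a zero divisor iff `a₁ = 0` and `a₂ = 0`. -/
theorem zeroDivisor_iff_CD (a₁ a₂ a₃ a₄ : ℝ)
    (hw : (⟨a₁, a₂, a₃, a₄⟩ : ℍ[ℝ, (-1 : ℝ), (0 : ℝ)]) ≠ 0) :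
    (∃ v : ℍ[ℝ, (-1 : ℝ), (0 : ℝ)], v ≠ 0 ∧
        (⟨a₁, a₂, a₃, a₄⟩ : ℍ[ℝ, (-1 : ℝ), (0 : ℝ)]) * v = 0) ↔
      (a₁ = 0 ∧ a₂ = 0) := by
  rw [QuaternionAlgebra.exists_ne_zero_mul_eq_zero_iff hw,
    QuaternionAlgebra.normSq_mk_neg_one_zero,
    add_eq_zero_iff_of_nonneg (sq_nonneg _) (sq_nonneg _), sq_eq_zero_iff, sq_eq_zero_iff]
end

section
/- In the system D(D,D,4) = A(0,0), a nonzero element w = a₁ + a₂·i + a₃·j + a₄·k is a zero divisor if and only if a₁ = 0; that is, for w ≠ 0, there exists v ≠ 0 with w·v = 0 if and only if a₁ = 0. -/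
open Quaternion

/-!
In `ℍ[R, 0, 0]` the conjugation identity `w * star w = re w ^ 2` holds, because the imaginary
units square to zero and anticommute. Hence if `re w ≠ 0`, multiplying `w * v = 0` on the left
by `star w` gives `re w ^ 2 • v = 0`, so `v = 0`; and if `re w = 0`, then `star w ≠ 0` is
annihilated by `w`.
-/

namespace QuaternionAlgebra

variable {R : Type*} [CommRing R]

theorem star_mul_self_eq_re_sq (w : ℍ[R, 0, 0]) : star w * w = ↑(w.re ^ 2) := by
  rw [star_mul_eq_coe]
  congr 1
  simp only [re_mul, re_star, imI_star, imJ_star, imK_star]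
  ring

theorem self_mul_star_eq_re_sq (w : ℍ[R, 0, 0]) : w * star w = ↑(w.re ^ 2) := by
  rw [← star_comm_self', star_mul_self_eq_re_sq]

variable [IsDomain R]

theorem eq_zero_of_mul_eq_zero_of_re_ne_zero {w v : ℍ[R, 0, 0]} (hre : w.re ≠ 0)
    (h : w * v = 0) : v = 0 := by
  have hsmul : w.re ^ 2 • v = 0 := by
    rw [← coe_mul_eq_smul, ← star_mul_self_eq_re_sq, mul_assoc, h, mul_zero]
  exact (smul_eq_zero.mp hsmul).resolve_left (pow_ne_zero 2 hre)

theorem exists_ne_zero_mul_eq_zero_iff_s7 {w : ℍ[R, 0, 0]} (hw : w ≠ 0) :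
    (∃ v ≠ 0, w * v = 0) ↔ w.re = 0 := by
  refine ⟨fun ⟨v, hv, h⟩ ↦ ?_, fun hre ↦ ⟨star w, star_ne_zero.mpr hw, ?_⟩⟩
  · by_contra hre
    exact hv (eq_zero_of_mul_eq_zero_of_re_ne_zero hre h)
  · rw [self_mul_star_eq_re_sq, hre, zero_pow two_ne_zero, coe_zero]

end QuaternionAlgebra

/-- In the system D(D,D,4) = A(0,0), a nonzero element `w = ⟨a₁,a₂,a₃,a₄⟩` is a zero divisor iff `a₁ = 0`. -/
theorem zeroDivisor_iff_DD (a₁ a₂ a₃ a₄ : ℝ)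
    (hw : (⟨a₁, a₂, a₃, a₄⟩ : ℍ[ℝ, (0 : ℝ), (0 : ℝ)]) ≠ 0) :
    (∃ v : ℍ[ℝ, (0 : ℝ), (0 : ℝ)], v ≠ 0 ∧
        (⟨a₁, a₂, a₃, a₄⟩ : ℍ[ℝ, (0 : ℝ), (0 : ℝ)]) * v = 0) ↔
      a₁ = 0 :=
  QuaternionAlgebra.exists_ne_zero_mul_eq_zero_iff_s7 hw
end

section
/- (Exponential in D(W,W,4), trigonometric case.) Let m₁, m₂, m₃, m₄ be real numbers with m₂² + m₃² − m₄² < 0 and set μ = √(m₄² − m₂² − m₃²). Define x₁(t) = e^{m₁t}·cos(μt) and x_s(t) = e^{m₁t}·(m_s/μ)·sin(μt) for s = 2,3,4. Then for every real t the functions satisfy the associated system: x₁'(t) = m₁x₁ + m₂x₂ + m₃x₃ − m₄x₄, x₂'(t) = m₂x₁ + m₁x₂ + m₄x₃ − m₃x₄, x₃'(t) = m₃x₁ − m₄x₂ + m₁x₃ + m₂x₄, x₄'(t) = m₄x₁ − m₃x₂ + m₂x₃ + m₁x₄ (each as a HasDerivAt statement), and (x₁(0), x₂(0), x₃(0), x₄(0))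 = (1, 0, 0, 0). -/
/-!
Writing `E = exp (m₁ t)`, `C = cos (μ t)`, `S = sin (μ t)`, one has `x₁' = m₁ x₁ - μ E S` and
`x_s' = m₁ x_s + m_s x₁` for `s = 2, 3, 4`. Since `(x₂, x₃, x₄)` is proportional to
`(m₂, m₃, m₄)`, the cross terms `m₄ x₃ - m₃ x₄`, `m₂ x₄ - m₄ x₂`, `m₂ x₃ - m₃ x₂` vanish, and
`m₂ x₂ + m₃ x₃ - m₄ x₄ = (m₂² + m₃² - m₄²) E S / μ = -μ E S` because `μ² = m₄² - m₂² - m₃²`.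
-/

open Real

lemma hasDerivAt_exp_mul (a t : ℝ) :
    HasDerivAt (fun t => exp (a * t)) (a * exp (a * t)) t := by
  simpa [mul_comm] using ((hasDerivAt_id t).const_mul a).exp

lemma hasDerivAt_exp_mul_mul_cos_mul (a b t : ℝ) :
    HasDerivAt (fun t => exp (a * t) * cos (b * t))
      (a * (exp (a * t) * cos (b * t)) - b * (exp (a * t) * sin (b * t))) t := by
  have hcos : HasDerivAt (fun t => cos (b * t)) (-sin (b * t) * b) t := by
    simpa [mul_comm] using ((hasDerivAt_id t).const_mul b).cos
  exact ((hasDerivAt_exp_mul a t).mul hcos).congr_deriv (by ring)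

lemma hasDerivAt_exp_mul_mul_div_mul_sin_mul (a m : ℝ) {b : ℝ} (hb : b ≠ 0) (t : ℝ) :
    HasDerivAt (fun t => exp (a * t) * (m / b) * sin (b * t))
      (m * (exp (a * t) * cos (b * t)) + a * (exp (a * t) * (m / b) * sin (b * t))) t := by
  have hsin : HasDerivAt (fun t => sin (b * t)) (cos (b * t) * b) t := by
    simpa [mul_comm] using ((hasDerivAt_id t).const_mul b).sin
  refine (((hasDerivAt_exp_mul a t).mul_const (m / b)).mul hsin).congr_deriv ?_
  field_simp
  ring

/-- Exponential in D(W,W,4) = ℍ[ℝ,1,1], trigonometric case. The given functions solve the associated real linear ODE system of Ẋ = M·X with initial value (1,0,0,0). -/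
theorem exp_WW_trig (m₁ m₂ m₃ m₄ : ℝ)
    (h : m₂ ^ 2 + m₃ ^ 2 - m₄ ^ 2 < 0)
    (x₁ x₂ x₃ x₄ : ℝ → ℝ)
    (μ : ℝ) (hμ : μ = Real.sqrt (m₄ ^ 2 - m₂ ^ 2 - m₃ ^ 2))
    (hx₁ : x₁ = fun t => Real.exp (m₁ * t) * Real.cos (μ * t))
    (hx₂ : x₂ = fun t => Real.exp (m₁ * t) * (m₂ / μ) * Real.sin (μ * t))
    (hx₃ : x₃ = fun t => Real.exp (m₁ * t) * (m₃ / μ) * Real.sin (μ * t))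
    (hx₄ : x₄ = fun t => Real.exp (m₁ * t) * (m₄ / μ) * Real.sin (μ * t))
    :
    (∀ t : ℝ,
      HasDerivAt x₁ (m₁ * x₁ t + m₂ * x₂ t + m₃ * x₃ t - m₄ * x₄ t) t ∧
      HasDerivAt x₂ (m₂ * x₁ t + m₁ * x₂ t + m₄ * x₃ t - m₃ * x₄ t) t ∧
      HasDerivAt x₃ (m₃ * x₁ t - m₄ * x₂ t + m₁ * x₃ t + m₂ * x₄ t) t ∧
      HasDerivAt x₄ (m₄ * x₁ t - m₃ * x₂ t + m₂ * x₃ t + m₁ * x₄ t) t) ∧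
    x₁ 0 = 1 ∧ x₂ 0 = 0 ∧ x₃ 0 = 0 ∧ x₄ 0 = 0 := by
  have hpos : 0 < m₄ ^ 2 - m₂ ^ 2 - m₃ ^ 2 := by linarith
  have hμ_sq : μ ^ 2 = m₄ ^ 2 - m₂ ^ 2 - m₃ ^ 2 := hμ ▸ sq_sqrt hpos.le
  have hμ_ne : μ ≠ 0 := hμ ▸ (sqrt_pos.mpr hpos).ne'
  subst hx₁ hx₂ hx₃ hx₄
  refine ⟨fun t => ⟨?_, ?_, ?_, ?_⟩, by simp, by simp, by simp, by simp⟩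
  · refine (hasDerivAt_exp_mul_mul_cos_mul m₁ μ t).congr_deriv ?_
    field_simp
    linear_combination -sin (t * μ) * hμ_sq
  · refine (hasDerivAt_exp_mul_mul_div_mul_sin_mul m₁ m₂ hμ_ne t).congr_deriv ?_
    ring
  · refine (hasDerivAt_exp_mul_mul_div_mul_sin_mul m₁ m₃ hμ_ne t).congr_deriv ?_
    ring
  · refine (hasDerivAt_exp_mul_mul_div_mul_sin_mul m₁ m₄ hμ_ne t).congr_deriv ?_
    ring
end

section
/- (Exponential in D(W,W,4), hyperbolic case.) Let m₁, m₂, m₃, m₄ be real numbers with m₂² + m₃² − m₄² > 0 and set μ = √(m₂² + m₃² − m₄²). Define x₁(t) = e^{m₁t}·cosh(μt) and x_s(t) = e^{m₁t}·(m_s/μ)·sinh(μt) for s = 2,3,4. Then for every real t the functions satisfy the associated system: x₁'(t) = m₁x₁ + m₂x₂ + m₃x₃ − m₄x₄, x₂'(t) = m₂x₁ + m₁x₂ + m₄x₃ − m₃x₄, x₃'(t) = m₃x₁ − m₄x₂ + m₁x₃ + m₂x₄, x₄'(t) = m₄x₁ − m₃x₂ + m₂x₃ + m₁x₄ (each as a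 HasDerivAt statement), and (x₁(0), x₂(0), x₃(0), x₄(0)) = (1, 0, 0, 0). -/
/-! Factor `x(t) = e^{m₁ t} y(t)`: the scalar part `m₁` only contributes `m₁ x`, and
`y = (cosh μt, (m₂, m₃, m₄) sinh μt / μ)` satisfies the remaining system because
`m₂² + m₃² - m₄² = μ²` and the cross terms cancel in pairs. -/

open Real

theorem hasDerivAt_exp_mul_mul_cosh (a b t : ℝ) :
    HasDerivAt (fun t => exp (a * t) * cosh (b * t))
      (a * (exp (a * t) * cosh (b * t)) + b * exp (a * t) * sinh (b * t)) t := by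
  have hexp := ((hasDerivAt_id t).const_mul a).exp
  have hcosh := ((hasDerivAt_id t).const_mul b).cosh
  refine (hexp.mul hcosh).congr_deriv ?_
  simp only [id, mul_one]
  ring

theorem hasDerivAt_exp_mul_div_mul_sinh (a b c t : ℝ) (hb : b ≠ 0) :
    HasDerivAt (fun t => exp (a * t) * (c / b) * sinh (b * t))
      (a * (exp (a * t) * (c / b) * sinh (b * t)) + c * (exp (a * t) * cosh (b * t))) t := by
  have hexp := ((hasDerivAt_id t).const_mul a).exp
  have hsinh := ((hasDerivAt_id t).const_mul b).sinh
  refine ((hexp.mul_const (c / b)).mul hsinh).congr_deriv ?_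
  simp only [id, mul_one]
  field_simp

/-- Exponential in D(W,W,4) = ℍ[ℝ,1,1], hyperbolic case. The given functions solve the associated real linear ODE system of Ẋ = M·X with initial value (1,0,0,0). -/
theorem exp_WW_hyperbolic (m₁ m₂ m₃ m₄ : ℝ)
    (h : m₂ ^ 2 + m₃ ^ 2 - m₄ ^ 2 > 0)
    (x₁ x₂ x₃ x₄ : ℝ → ℝ)
    (μ : ℝ) (hμ : μ = Real.sqrt (m₂ ^ 2 + m₃ ^ 2 - m₄ ^ 2))
    (hx₁ : x₁ = fun t => Real.exp (m₁ * t) * Real.cosh (μ * t))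
    (hx₂ : x₂ = fun t => Real.exp (m₁ * t) * (m₂ / μ) * Real.sinh (μ * t))
    (hx₃ : x₃ = fun t => Real.exp (m₁ * t) * (m₃ / μ) * Real.sinh (μ * t))
    (hx₄ : x₄ = fun t => Real.exp (m₁ * t) * (m₄ / μ) * Real.sinh (μ * t))
    :
    (∀ t : ℝ,
      HasDerivAt x₁ (m₁ * x₁ t + m₂ * x₂ t + m₃ * x₃ t - m₄ * x₄ t) t ∧
      HasDerivAt x₂ (m₂ * x₁ t + m₁ * x₂ t + m₄ * x₃ t - m₃ * x₄ t) t ∧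
      HasDerivAt x₃ (m₃ * x₁ t - m₄ * x₂ t + m₁ * x₃ t + m₂ * x₄ t) t ∧
      HasDerivAt x₄ (m₄ * x₁ t - m₃ * x₂ t + m₂ * x₃ t + m₁ * x₄ t) t) ∧
    x₁ 0 = 1 ∧ x₂ 0 = 0 ∧ x₃ 0 = 0 ∧ x₄ 0 = 0 := by
  have hμ0 : μ ≠ 0 := hμ ▸ (sqrt_pos.mpr h).ne'
  have hμsq : μ ^ 2 = m₂ ^ 2 + m₃ ^ 2 - m₄ ^ 2 := hμ ▸ sq_sqrt h.le
  subst hx₁ hx₂ hx₃ hx₄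
  refine ⟨fun t => ⟨?_, ?_, ?_, ?_⟩, by simp, by simp, by simp, by simp⟩
  · convert hasDerivAt_exp_mul_mul_cosh m₁ μ t using 1
    field_simp
    linear_combination -sinh (t * μ) * hμsq
  · convert hasDerivAt_exp_mul_div_mul_sinh m₁ μ m₂ t hμ0 using 1
    field_simp
    ring
  · convert hasDerivAt_exp_mul_div_mul_sinh m₁ μ m₃ t hμ0 using 1
    field_simp
    ring
  · convert hasDerivAt_exp_mul_div_mul_sinh m₁ μ m₄ t hμ0 using 1
    field_simp
    ring
end

section
/- (Exponential in D(W,D,4).) Let m₁, m₂, m₃, m₄ be real numbers with m₂ ≠ 0. Define x₁(t) = e^{m₁t}·cosh(m₂t), x₂(t) = e^{m₁t}·sinh(m₂t), x₃(t) = e^{m₁t}·(m₃/m₂)·sinh(m₂t), x₄(t) = e^{m₁t}·(m₄/m₂)·sinh(m₂t). Then for every real t the functions satisfy the associated system: x₁'(t) = m₁x₁ + m₂x₂, x₂'(t) = m₂x₁ + m₁x₂, x₃'(t) = m₃x₁ − m₄x₂ + m₁x₃ + m₂x₄, x₄'(t) = m₄x₁ − m₃x₂ + m₂x₃ + m₁x₄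 (each as a HasDerivAt statement), and (x₁(0), x₂(0), x₃(0), x₄(0)) = (1, 0, 0, 0); this establishes the representation Exp(M) = e^{m₁}(cosh(m₂)·1 + (sinh(m₂)/m₂)·(m₂·i + m₃·j + m₄·k)). -/
open Real

theorem hasDerivAt_exp_mul_mul_cosh_mul (a b t : ℝ) :
    HasDerivAt (fun t => exp (a * t) * cosh (b * t))
      (a * (exp (a * t) * cosh (b * t)) + b * (exp (a * t) * sinh (b * t))) t := by
  have hexp := ((hasDerivAt_id t).const_mul a).exp
  have hcosh := ((hasDerivAt_id t).const_mul b).cosh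
  exact (hexp.fun_mul hcosh).congr_deriv (by simp only [id, mul_one]; ring)

theorem hasDerivAt_exp_mul_mul_sinh_mul (a b t : ℝ) :
    HasDerivAt (fun t => exp (a * t) * sinh (b * t))
      (b * (exp (a * t) * cosh (b * t)) + a * (exp (a * t) * sinh (b * t))) t := by
  have hexp := ((hasDerivAt_id t).const_mul a).exp
  have hsinh := ((hasDerivAt_id t).const_mul b).sinh
  exact (hexp.fun_mul hsinh).congr_deriv (by simp only [id, mul_one]; ring)

/-- Exponential in D(W,D,4) = ℍ[ℝ,1,0]: establishes Exp(M) = e^{m₁}(cosh m₂ + (sinh m₂ / m₂)(m₂·i + m₃·j + m₄·k)). The given functions solve the associated real linear ODE system of Ẋ = M·X with initial value (1,0,0,0). -/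
theorem exp_WD (m₁ m₂ m₃ m₄ : ℝ)
    (h : m₂ ≠ 0)
    (x₁ x₂ x₃ x₄ : ℝ → ℝ)
    (hx₁ : x₁ = fun t => Real.exp (m₁ * t) * Real.cosh (m₂ * t))
    (hx₂ : x₂ = fun t => Real.exp (m₁ * t) * Real.sinh (m₂ * t))
    (hx₃ : x₃ = fun t => Real.exp (m₁ * t) * (m₃ / m₂) * Real.sinh (m₂ * t))
    (hx₄ : x₄ = fun t => Real.exp (m₁ * t) * (m₄ / m₂) * Real.sinh (m₂ * t))
    :
    (∀ t : ℝ,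
      HasDerivAt x₁ (m₁ * x₁ t + m₂ * x₂ t) t ∧
      HasDerivAt x₂ (m₂ * x₁ t + m₁ * x₂ t) t ∧
      HasDerivAt x₃ (m₃ * x₁ t - m₄ * x₂ t + m₁ * x₃ t + m₂ * x₄ t) t ∧
      HasDerivAt x₄ (m₄ * x₁ t - m₃ * x₂ t + m₂ * x₃ t + m₁ * x₄ t) t) ∧
    x₁ 0 = 1 ∧ x₂ 0 = 0 ∧ x₃ 0 = 0 ∧ x₄ 0 = 0 := by
  have hderiv₁ : ∀ t, HasDerivAt x₁ (m₁ * x₁ t + m₂ * x₂ t) t := by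
    subst hx₁ hx₂; exact hasDerivAt_exp_mul_mul_cosh_mul m₁ m₂
  have hderiv₂ : ∀ t, HasDerivAt x₂ (m₂ * x₁ t + m₁ * x₂ t) t := by
    subst hx₁ hx₂; exact hasDerivAt_exp_mul_mul_sinh_mul m₁ m₂
  -- `x₃` and `x₄` are multiples of `x₂`, and `m₂ x₃ = m₃ x₂`, `m₂ x₄ = m₄ x₂` cancel the cross terms.
  have hx₃₂ : x₃ = fun t => m₃ / m₂ * x₂ t := by
    rw [hx₃, hx₂]; funext t; ring
  have hx₄₂ : x₄ = fun t => m₄ / m₂ * x₂ t := by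
    rw [hx₄, hx₂]; funext t; ring
  refine ⟨fun t => ⟨hderiv₁ t, hderiv₂ t, ?_, ?_⟩, by simp [hx₁], by simp [hx₂], by simp [hx₃], by simp [hx₄]⟩
  · rw [hx₃₂, hx₄₂]
    refine ((hderiv₂ t).const_mul (m₃ / m₂)).congr_deriv ?_
    field_simp
    ring
  · rw [hx₃₂, hx₄₂]
    refine ((hderiv₂ t).const_mul (m₄ / m₂)).congr_deriv ?_
    field_simp
    ring
end

section
/- (Exponential in AH, trigonometric case.) Let m₁, m₂, m₃, m₄ be real numbers with m₃² + m₄² − m₂² < 0 and set μ = √(m₂² − m₃² − m₄²). Define x₁(t) = e^{m₁t}·cos(μt) and x_s(t) = e^{m₁t}·(m_s/μ)·sin(μt) for s = 2,3,4. Then for every real t the functions satisfy the associated system: x₁'(t) = m₁x₁ − m₂x₂ + m₃x₃ + m₄x₄, x₂'(t) = m₂x₁ + m₁x₂ − m₃x₄ + m₄x₃, x₃'(t) = m₃x₁ + m₄x₂ + m₁x₃ − m₂x₄, x₄'(t) = m₄x₁ − m₃x₂ + m₂x₃ + m₁x₄ (each as a HasDerivAt statement), and (x₁(0), x₂(0),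 x₃(0), x₄(0)) = (1, 0, 0, 0). -/
/-! The imaginary part `N = m₂ i + m₃ j + m₄ k` of `M` squares to `-(m₂² - m₃² - m₄²) = -μ²`, so
`N / μ` behaves like the complex unit and `Exp (tM) = e^{m₁ t} (cos μt + (N / μ) sin μt)`. Checking
the system is a derivative computation in which `μ²` is traded for `m₂² - m₃² - m₄²`. -/

open Real

theorem hasDerivAt_exp_mul_mul_cos (a μ t : ℝ) :
    HasDerivAt (fun t => exp (a * t) * cos (μ * t))
      (a * (exp (a * t) * cos (μ * t)) - μ * (exp (a * t) * sin (μ * t))) t := by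
  have hexp := ((hasDerivAt_id t).const_mul a).exp
  have hcos := ((hasDerivAt_id t).const_mul μ).cos
  simp only [id, mul_one] at hexp hcos
  exact (hexp.mul hcos).congr_deriv (by ring)

theorem hasDerivAt_exp_mul_mul_const_mul_sin (a c μ t : ℝ) :
    HasDerivAt (fun t => exp (a * t) * c * sin (μ * t))
      (c * (a * (exp (a * t) * sin (μ * t)) + μ * (exp (a * t) * cos (μ * t)))) t := by
  have hexp := ((hasDerivAt_id t).const_mul a).exp
  have hsin := ((hasDerivAt_id t).const_mul μ).sin
  simp only [id, mul_one] at hexp hsin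
  exact ((hexp.mul_const c).mul hsin).congr_deriv (by ring)

/-- Exponential in AH = ℍ[ℝ,−1,1], trigonometric case. The given functions solve the associated real linear ODE system of Ẋ = M·X with initial value (1,0,0,0). -/
theorem exp_AH_trig (m₁ m₂ m₃ m₄ : ℝ)
    (h : m₃ ^ 2 + m₄ ^ 2 - m₂ ^ 2 < 0)
    (x₁ x₂ x₃ x₄ : ℝ → ℝ)
    (μ : ℝ) (hμ : μ = Real.sqrt (m₂ ^ 2 - m₃ ^ 2 - m₄ ^ 2))
    (hx₁ : x₁ = fun t => Real.exp (m₁ * t) * Real.cos (μ * t))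
    (hx₂ : x₂ = fun t => Real.exp (m₁ * t) * (m₂ / μ) * Real.sin (μ * t))
    (hx₃ : x₃ = fun t => Real.exp (m₁ * t) * (m₃ / μ) * Real.sin (μ * t))
    (hx₄ : x₄ = fun t => Real.exp (m₁ * t) * (m₄ / μ) * Real.sin (μ * t))
    :
    (∀ t : ℝ,
      HasDerivAt x₁ (m₁ * x₁ t - m₂ * x₂ t + m₃ * x₃ t + m₄ * x₄ t) t ∧
      HasDerivAt x₂ (m₂ * x₁ t + m₁ * x₂ t - m₃ * x₄ t + m₄ * x₃ t) t ∧
      HasDerivAt x₃ (m₃ * x₁ t + m₄ * x₂ t + m₁ * x₃ t - m₂ * x₄ t) t ∧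
      HasDerivAt x₄ (m₄ * x₁ t - m₃ * x₂ t + m₂ * x₃ t + m₁ * x₄ t) t) ∧
    x₁ 0 = 1 ∧ x₂ 0 = 0 ∧ x₃ 0 = 0 ∧ x₄ 0 = 0 := by
  have hpos : 0 < m₂ ^ 2 - m₃ ^ 2 - m₄ ^ 2 := by linarith
  have hμne : μ ≠ 0 := hμ ▸ (sqrt_pos.mpr hpos).ne'
  have hμsq : μ ^ 2 = m₂ ^ 2 - m₃ ^ 2 - m₄ ^ 2 := hμ ▸ sq_sqrt hpos.le
  subst hx₁ hx₂ hx₃ hx₄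
  refine ⟨fun t => ⟨?_, ?_, ?_, ?_⟩, by simp, by simp, by simp, by simp⟩
  · convert hasDerivAt_exp_mul_mul_cos m₁ μ t using 1
    beta_reduce
    field_simp
    linear_combination sin (t * μ) * hμsq
  all_goals
    convert hasDerivAt_exp_mul_mul_const_mul_sin m₁ _ μ t using 1
    field_simp
    ring
end
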